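/- For any graph G and any vertex v of G, γ_g'(G) − γ_g'(G−v) ≤ 2, where γ_g' is the Staller-start game domination number. -/

import Mathlib

open Classical

noncomputable section

namespace DomGame

variable {V : Type*} [Fintype V]

/-- Closed neighborhood of `v` as a `Finset`. -/
noncomputable def N (G : SimpleGraph V) (v : V) : Finset V :=
  Finset.univ.filter (fun u => G.Adj v u ∨ u = v)

/-- Legal moves given the set `S` of already dominated vertices. -/
noncomputable def moves (G : SimpleGraph V) (S : Finset V) : Finset V :=
  Finset.univ.filter (fun v => ¬ N G v ⊆ S)

lemma card_lt {G : SimpleGraph V} {S : Finset V} (v : V) (hv : v ∈ moves G S) :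
    (Finset.univ \ (S ∪ N G v)).card < (Finset.univ \ S).card := by
  simp only [moves, Finset.mem_filter] at hv
  obtain ⟨u, hu, hus⟩ := Finset.not_subset.mp hv.2
  apply Finset.card_lt_card
  refine ⟨Finset.sdiff_subset_sdiff (le_refl _) Finset.subset_union_left, ?_⟩
  intro hsub
  have := hsub (Finset.mem_sdiff.mpr ⟨Finset.mem_univ u, hus⟩)
  rw [Finset.mem_sdiff, Finset.mem_union] at this
  exact this.2 (Or.inr hu)

mutual
/-- Number of moves with optimal play when it is Dominator's turn and
`S` is the set of already dominated vertices. -/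
noncomputable def gameD (G : SimpleGraph V) (S : Finset V) : ℕ :=
  if h : (moves G S).Nonempty then
    1 + (moves G S).attach.inf' (by simpa using h)
      (fun v => gameS G (S ∪ N G v.1))
  else 0
termination_by (Finset.univ \ S).card
decreasing_by exact card_lt v.1 v.2

/-- Number of moves with optimal play when it is Staller's turn. -/
noncomputable def gameS (G : SimpleGraph V) (S : Finset V) : ℕ :=
  if h : (moves G S).Nonempty then
    1 + (moves G S).attach.sup' (by simpa using h)
      (fun v => gameD G (S ∪ N G v.1))
  else 0
termination_by (Finset.univ \ S).card
decreasing_by exact card_lt v.1 v.2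
end

/-- The (Dominator-start) game domination number. -/
noncomputable def gammaG (G : SimpleGraph V) : ℕ := gameD G ∅

/-- The Staller-start game domination number. -/
noncomputable def gammaG' (G : SimpleGraph V) : ℕ := gameS G ∅

end DomGame

/-!
Once the closed neighbourhood of `v` is dominated, `v` is no longer a legal move and every move
of `G` acts on `V ∖ {v}` exactly as in `G - v`, so from then on the game on `G` is no longer than
the game on `G - v`. Hence Dominator, to move in `G`, can play `v` (unless its closed
neighbourhood is already dominated) and reach a position worth at most one more than the
Staller-start game on `G - v`; here one uses the continuation principle (a larger dominated set
never lengthens the game) and `γ_g ≤ γ_g' + 1`. Applying this after Staller's first move in `G`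
gives `γ_g'(G) ≤ γ_g'(G - v) + 2`.
-/

namespace DomGame

open Finset

section Game

variable {V : Type*} [Fintype V] {G : SimpleGraph V} {S A B : Finset V} {a : V}

theorem mem_N {u w : V} : u ∈ N G w ↔ G.Adj w u ∨ u = w := by
  simp [N]

theorem self_mem_N (G : SimpleGraph V) (w : V) : w ∈ N G w := mem_N.mpr (Or.inr rfl)

theorem mem_moves : a ∈ moves G S ↔ ¬ N G a ⊆ S := by
  simp [moves]

theorem moves_nonempty_iff : (moves G S).Nonempty ↔ S ≠ univ := by
  refine ⟨fun ⟨a, ha⟩ hS => mem_moves.mp ha (hS ▸ subset_univ _), fun hS => ?_⟩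
  obtain ⟨w, -, hw⟩ := exists_of_ssubset (ssubset_univ_iff.mpr hS)
  exact ⟨w, mem_moves.mpr fun h => hw (h (self_mem_N G w))⟩

theorem gameD_eq_zero (h : ¬ (moves G S).Nonempty) : gameD G S = 0 := by
  rw [gameD, dif_neg h]

theorem gameS_eq_zero (h : ¬ (moves G S).Nonempty) : gameS G S = 0 := by
  rw [gameS, dif_neg h]

theorem gameD_le (ha : a ∈ moves G S) : gameD G S ≤ 1 + gameS G (S ∪ N G a) := by
  rw [gameD, dif_pos ⟨a, ha⟩]
  exact Nat.add_le_add_left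
    (inf'_le (fun b : moves G S => gameS G (S ∪ N G b)) (mem_attach _ ⟨a, ha⟩)) 1

theorem le_gameS (ha : a ∈ moves G S) : 1 + gameD G (S ∪ N G a) ≤ gameS G S := by
  rw [gameS, dif_pos ⟨a, ha⟩]
  exact Nat.add_le_add_left
    (le_sup' (fun b : moves G S => gameD G (S ∪ N G b)) (mem_attach _ ⟨a, ha⟩)) 1

theorem exists_gameD_eq (h : (moves G S).Nonempty) :
    ∃ a ∈ moves G S, gameD G S = 1 + gameS G (S ∪ N G a) := by
  obtain ⟨⟨a, ha⟩, -, hval⟩ := exists_mem_eq_inf' (attach_nonempty_iff.mpr h)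
    (fun b : moves G S => gameS G (S ∪ N G b))
  exact ⟨a, ha, by rw [gameD, dif_pos h, hval]⟩

theorem gameS_le_iff {c : ℕ} :
    gameS G S ≤ c ↔ ∀ a ∈ moves G S, 1 + gameD G (S ∪ N G a) ≤ c := by
  refine ⟨fun h a ha => (le_gameS ha).trans h, fun h => ?_⟩
  by_cases hS : (moves G S).Nonempty
  · rw [gameS, dif_pos hS]
    obtain ⟨⟨a, ha⟩, -, hval⟩ := exists_mem_eq_sup' (attach_nonempty_iff.mpr hS)
      (fun b : moves G S => gameD G (S ∪ N G b))
    rw [hval]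
    exact h a ha
  · rw [gameS_eq_zero hS]
    exact Nat.zero_le c

theorem exists_move_superset (hB : (moves G B).Nonempty) (hAB : A ⊆ B) :
    ∃ b ∈ moves G B, A ∪ N G a ⊆ B ∪ N G b := by
  by_cases ha : a ∈ moves G B
  · exact ⟨a, ha, union_subset_union hAB le_rfl⟩
  · obtain ⟨b, hb⟩ := hB
    refine ⟨b, hb, union_subset (hAB.trans subset_union_left) ?_⟩
    exact (not_not.mp (mt mem_moves.mpr ha)).trans subset_union_left

mutual

theorem gameD_anti {A B : Finset V} (hAB : A ⊆ B) : gameD G B ≤ gameD G A := by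
  by_cases hB : (moves G B).Nonempty
  · have hA : (moves G A).Nonempty :=
      moves_nonempty_iff.mpr fun h => moves_nonempty_iff.mp hB (univ_subset_iff.mp (h ▸ hAB))
    obtain ⟨a, ha, hopt⟩ := exists_gameD_eq hA
    obtain ⟨b, hb, hsub⟩ := exists_move_superset (a := a) hB hAB
    calc gameD G B ≤ 1 + gameS G (B ∪ N G b) := gameD_le hb
      _ ≤ 1 + gameS G (A ∪ N G a) := Nat.add_le_add_left (gameS_anti hsub) 1
      _ = gameD G A := hopt.symm
  · rw [gameD_eq_zero hB]
    exact Nat.zero_le _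
termination_by (univ \ A).card
decreasing_by exact card_lt a ha

theorem gameS_anti {A B : Finset V} (hAB : A ⊆ B) : gameS G B ≤ gameS G A :=
  gameS_le_iff.mpr fun b hb =>
    have hbA : b ∈ moves G A := mem_moves.mpr fun h => mem_moves.mp hb (h.trans hAB)
    calc 1 + gameD G (B ∪ N G b) ≤ 1 + gameD G (A ∪ N G b) :=
          Nat.add_le_add_left (gameD_anti (union_subset_union hAB le_rfl)) 1
      _ ≤ gameS G A := le_gameS hbA
termination_by (univ \ A).card
decreasing_by exact card_lt b hbA

end

theorem gameS_le_gameD_add_one (G : SimpleGraph V) (S : Finset V) : gameS G S ≤ gameD G S + 1 :=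
  gameS_le_iff.mpr fun a _ => by
    have := gameD_anti (G := G) (subset_union_left (s₁ := S) (s₂ := N G a))
    omega

theorem gameD_le_gameS_add_one (G : SimpleGraph V) (S : Finset V) :
    gameD G S ≤ gameS G S + 1 := by
  by_cases hS : (moves G S).Nonempty
  · obtain ⟨a, ha⟩ := hS
    have h₁ := gameD_le ha
    have h₂ := gameS_le_gameD_add_one G (S ∪ N G a)
    have h₃ := le_gameS ha
    omega
  · rw [gameD_eq_zero hS]
    exact Nat.zero_le _

end Game

section Restrict

variable {V : Type*} {v : V} {A B S : Finset V}

def restrict (v : V) (S : Finset V) : Finset ({v}ᶜ : Set V) := S.subtype (· ∈ ({v}ᶜ : Set V))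

theorem mem_restrict {u : ({v}ᶜ : Set V)} : u ∈ restrict v S ↔ (u : V) ∈ S := mem_subtype

theorem restrict_mono (h : A ⊆ B) : restrict v A ⊆ restrict v B := subtype_mono h

theorem restrict_empty : restrict v (∅ : Finset V) = ∅ :=
  subtype_eq_empty.mpr fun _ _ => notMem_empty _

end Restrict

section VertexDeletion

variable {V : Type*} [Fintype V] {G : SimpleGraph V} {S : Finset V} {v : V}

-- `gameD` on `G.induce {v}ᶜ` unions finsets with the classical `DecidableEq` instance; without
-- this, our unions on `↥{v}ᶜ` would use `Subtype.instDecidableEq` and not match.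
attribute [-instance] Subtype.instDecidableEq

theorem mem_N_induce {u m : ({v}ᶜ : Set V)} :
    u ∈ N (G.induce {v}ᶜ) m ↔ (u : V) ∈ N G m := by
  simp only [mem_N, SimpleGraph.comap_adj, Function.Embedding.subtype_apply, Subtype.ext_iff]

theorem restrict_union_N (m : ({v}ᶜ : Set V)) :
    restrict v (S ∪ N G m) = restrict v S ∪ N (G.induce {v}ᶜ) m := by
  ext u
  simp only [mem_union, mem_restrict, mem_N_induce]

theorem N_induce_subset_restrict_iff {m : ({v}ᶜ : Set V)} :
    N (G.induce {v}ᶜ) m ⊆ restrict v S ↔ N G m ⊆ insert v S := by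
  constructor
  · intro h u hu
    by_cases huv : u = v
    · exact huv ▸ mem_insert_self v S
    · exact mem_insert_of_mem (mem_restrict.mp (h ((mem_N_induce (u := ⟨u, huv⟩)).mpr hu)))
  · intro h u hu
    exact mem_restrict.mpr ((mem_insert.mp (h (mem_N_induce.mp hu))).resolve_left u.2)

theorem mem_moves_of_mem_moves_induce {m : ({v}ᶜ : Set V)}
    (hm : m ∈ moves (G.induce {v}ᶜ) (restrict v S)) : (m : V) ∈ moves G S :=
  mem_moves.mpr fun h => mem_moves.mp hm
    (N_induce_subset_restrict_iff.mpr (h.trans (subset_insert v S)))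

theorem mem_moves_induce_of_mem_moves {m : ({v}ᶜ : Set V)} (hv : v ∈ S)
    (hm : (m : V) ∈ moves G S) : m ∈ moves (G.induce {v}ᶜ) (restrict v S) :=
  mem_moves.mpr fun h => mem_moves.mp hm (insert_eq_of_mem hv ▸ N_induce_subset_restrict_iff.mp h)

mutual

theorem gameD_le_gameD_induce_of_N_subset {S : Finset V} (hv : N G v ⊆ S) :
    gameD G S ≤ gameD (G.induce {v}ᶜ) (restrict v S) := by
  by_cases hS : (moves G S).Nonempty
  · obtain ⟨m, hm⟩ := hS
    have hmv : m ≠ v := by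
      rintro rfl
      exact mem_moves.mp hm hv
    have hT : (moves (G.induce {v}ᶜ) (restrict v S)).Nonempty :=
      ⟨⟨m, hmv⟩, mem_moves_induce_of_mem_moves (hv (self_mem_N G v)) hm⟩
    obtain ⟨d, hd, hopt⟩ := exists_gameD_eq hT
    have hd' := mem_moves_of_mem_moves_induce hd
    calc gameD G S ≤ 1 + gameS G (S ∪ N G d) := gameD_le hd'
      _ ≤ 1 + gameS (G.induce {v}ᶜ) (restrict v (S ∪ N G d)) :=
          Nat.add_le_add_left (gameS_le_gameS_induce_of_N_subset (hv.trans subset_union_left)) 1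
      _ = gameD (G.induce {v}ᶜ) (restrict v S) := by rw [restrict_union_N, hopt]
  · rw [gameD_eq_zero hS]
    exact Nat.zero_le _
termination_by (univ \ S).card
decreasing_by exact card_lt _ hd'

theorem gameS_le_gameS_induce_of_N_subset {S : Finset V} (hv : N G v ⊆ S) :
    gameS G S ≤ gameS (G.induce {v}ᶜ) (restrict v S) :=
  gameS_le_iff.mpr fun m hm =>
    have hmv : m ≠ v := by
      rintro rfl
      exact mem_moves.mp hm hv
    have hm' := mem_moves_induce_of_mem_moves (m := ⟨m, hmv⟩) (hv (self_mem_N G v)) hm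
    calc 1 + gameD G (S ∪ N G m)
        ≤ 1 + gameD (G.induce {v}ᶜ) (restrict v (S ∪ N G m)) :=
          Nat.add_le_add_left (gameD_le_gameD_induce_of_N_subset (hv.trans subset_union_left)) 1
      _ = 1 + gameD (G.induce {v}ᶜ) (restrict v S ∪ N (G.induce {v}ᶜ) ⟨m, hmv⟩) := by
          rw [← restrict_union_N]
      _ ≤ gameS (G.induce {v}ᶜ) (restrict v S) := le_gameS hm'
termination_by (univ \ S).card
decreasing_by exact card_lt _ hm

end

theorem gameD_le_gameS_induce_add_one (S : Finset V) :
    gameD G S ≤ gameS (G.induce {v}ᶜ) (restrict v S) + 1 := by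
  by_cases hv : N G v ⊆ S
  · exact (gameD_le_gameD_induce_of_N_subset hv).trans (gameD_le_gameS_add_one _ _)
  · calc gameD G S ≤ 1 + gameS G (S ∪ N G v) := gameD_le (mem_moves.mpr hv)
      _ ≤ 1 + gameS (G.induce {v}ᶜ) (restrict v (S ∪ N G v)) :=
          Nat.add_le_add_left (gameS_le_gameS_induce_of_N_subset subset_union_right) 1
      _ ≤ 1 + gameS (G.induce {v}ᶜ) (restrict v S) :=
          Nat.add_le_add_left (gameS_anti (restrict_mono subset_union_left)) 1
      _ = gameS (G.induce {v}ᶜ) (restrict v S) + 1 := Nat.add_comm _ _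

theorem gameS_le_gameS_induce_add_two (S : Finset V) :
    gameS G S ≤ gameS (G.induce {v}ᶜ) (restrict v S) + 2 :=
  gameS_le_iff.mpr fun a _ => by
    have h₁ := gameD_le_gameS_induce_add_one (G := G) (v := v) (S ∪ N G a)
    have h₂ := gameS_anti (G := G.induce {v}ᶜ)
      (restrict_mono (v := v) (subset_union_left (s₁ := S) (s₂ := N G a)))
    omega

end VertexDeletion

end DomGame

open DomGame in
/-- For any graph `G` and any vertex `v`, `γ_g'(G) − γ_g'(G−v) ≤ 2`. -/
theorem vertex_removal_gameS {V : Type*} [Fintype V] (G : SimpleGraph V) (v : V) :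
    (gammaG' G : ℤ) - gammaG' (G.induce {v}ᶜ) ≤ 2 := by
  have h := gameS_le_gameS_induce_add_two (G := G) (v := v) ∅
  rw [restrict_empty] at h
  unfold gammaG'
  omega
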